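/- Let (y_{n,i})_{n∈A, i≥1} be independent random variables with y_{n,i} ~ N(μ_n + c_n·i, σ_n²) for a finite nonempty index set A, constants c_n ∈ ℝ and σ_n > 0. Define λ_j = Σ_{n∈A} (1/σ_n²) Σ_{i=1}^j [c_n·i·(y_{n,i} − μ_n) − c_n² i²/2]. Then λ_j / j³ converges almost surely to Σ_{n∈A} c_n²/(6σ_n²) as j → ∞. -/

import Mathlib

open Finset MeasureTheory ProbabilityTheory Filter Topology
open scoped NNReal

/-!
`λ_j` is a finite sum of independent Gaussians: its mean is `(∑ₙ cₙ²/(2σₙ²)) ∑_{i ≤ j} i²`,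
which grows like `(∑ₙ cₙ²/(6σₙ²)) j³`, and its variance is `(∑ₙ cₙ²/σₙ²) ∑_{i ≤ j} i² ≤ C j³`.
Chebyshev's inequality bounds `P(|λ_j - E λ_j| ≥ δ j³)` by `C / (δ² j³)`, which is summable,
so by Borel–Cantelli `(λ_j - E λ_j) / j³ → 0` almost surely.
-/

theorem sum_Icc_sq (j : ℕ) :
    ∑ i ∈ Icc 1 j, (i : ℝ) ^ 2 = j * (j + 1) * (2 * j + 1) / 6 := by
  induction j with
  | zero => simp
  | succ j ih =>
    rw [sum_Icc_succ_top (by omega), ih]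
    push_cast
    ring

theorem sum_Icc_sq_le_cube (j : ℕ) : ∑ i ∈ Icc 1 j, (i : ℝ) ^ 2 ≤ j ^ 3 :=
  calc ∑ i ∈ Icc 1 j, (i : ℝ) ^ 2 ≤ ∑ _i ∈ Icc 1 j, (j : ℝ) ^ 2 :=
        sum_le_sum fun i hi => by gcongr; exact_mod_cast (mem_Icc.1 hi).2
    _ = j ^ 3 := by simp; ring

theorem tendsto_sum_Icc_sq_div_cube :
    Tendsto (fun j : ℕ => (∑ i ∈ Icc 1 j, (i : ℝ) ^ 2) / j ^ 3) atTop (𝓝 (1 / 3)) := by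
  have hinv := tendsto_one_div_atTop_nhds_zero_nat (𝕜 := ℝ)
  have h : Tendsto (fun j : ℕ => (1 + 1 / (j : ℝ)) * (2 + 1 / (j : ℝ)) / 6) atTop
      (𝓝 ((1 + 0) * (2 + 0) / 6)) :=
    ((tendsto_const_nhds.add hinv).mul (tendsto_const_nhds.add hinv)).div_const 6
  rw [show ((1 : ℝ) + 0) * (2 + 0) / 6 = 1 / 3 by norm_num] at h
  refine h.congr' ?_
  filter_upwards [eventually_ne_atTop 0] with j hj
  rw [sum_Icc_sq]
  field_simp

section Chebyshev

variable {Ω : Type*} {mΩ : MeasurableSpace Ω} {μ : Measure Ω} [IsFiniteMeasure μ]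
  {S : ℕ → Ω → ℝ} {r : ℕ → ℝ}

theorem ae_eventually_abs_sub_integral_lt_of_summable_variance (hS : ∀ j, MemLp (S j) 2 μ)
    (hr : ∀ j, 0 < r j) (hsum : Summable fun j => Var[S j; μ] / r j ^ 2) {δ : ℝ} (hδ : 0 < δ) :
    ∀ᵐ ω ∂μ, ∀ᶠ j in atTop, |S j ω - μ[S j]| < δ * r j := by
  set E : ℕ → Set Ω := fun j => {ω | δ * r j ≤ |S j ω - μ[S j]|}
  have hchebyshev (j : ℕ) : μ (E j) ≤ ENNReal.ofReal (δ⁻¹ ^ 2 * (Var[S j; μ] / r j ^ 2)) := by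
    refine (meas_ge_le_variance_div_sq (hS j) (mul_pos hδ (hr j))).trans_eq ?_
    congr 1
    field_simp
  have hfinite : ∑' j, μ (E j) ≠ ⊤ := by
    refine ne_top_of_le_ne_top ?_ (ENNReal.tsum_le_tsum hchebyshev)
    rw [← ENNReal.ofReal_tsum_of_nonneg
      (fun j => mul_nonneg (by positivity) (div_nonneg (variance_nonneg _ _) (by positivity)))
      (hsum.mul_left _)]
    exact ENNReal.ofReal_ne_top
  filter_upwards [measure_eq_zero_iff_ae_notMem.1 (measure_limsup_atTop_eq_zero hfinite)]
    with ω hω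
  rw [mem_limsup_iff_frequently_mem, not_frequently] at hω
  filter_upwards [hω] with j hj
  exact not_le.1 hj

theorem ae_tendsto_sub_integral_div_of_summable_variance (hS : ∀ j, MemLp (S j) 2 μ)
    (hr : ∀ j, 0 < r j) (hsum : Summable fun j => Var[S j; μ] / r j ^ 2) :
    ∀ᵐ ω ∂μ, Tendsto (fun j => (S j ω - μ[S j]) / r j) atTop (𝓝 0) := by
  have h := ae_all_iff.2 fun k : ℕ =>
    ae_eventually_abs_sub_integral_lt_of_summable_variance hS hr hsum
      (Nat.one_div_pos_of_nat (n := k))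
  filter_upwards [h] with ω hω
  rw [Metric.tendsto_nhds]
  intro ε hε
  obtain ⟨k, hk⟩ := exists_nat_one_div_lt hε
  filter_upwards [hω k] with j hj
  rw [dist_zero_right, norm_div, Real.norm_of_nonneg (hr j).le, div_lt_iff₀ (hr j)]
  exact hj.trans (mul_lt_mul_of_pos_right hk (hr j))

end Chebyshev

section SlopeChange

variable {Ω : Type*} {mΩ : MeasurableSpace Ω} {μ : Measure Ω} {ι : Type*}

noncomputable def llrIncrement (m c σ : ι → ℝ) (y : ι → ℕ → Ω → ℝ) (p : ι × ℕ) (ω : Ω) : ℝ :=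
  1 / σ p.1 ^ 2 * (c p.1 * p.2 * (y p.1 p.2 ω - m p.1) - c p.1 ^ 2 * (p.2 : ℝ) ^ 2 / 2)

theorem sum_llrIncrement [Fintype ι] (m c σ : ι → ℝ) (y : ι → ℕ → Ω → ℝ) (j : ℕ) :
    ∑ p ∈ univ ×ˢ Icc 1 j, llrIncrement m c σ y p = fun ω =>
      ∑ n : ι, 1 / σ n ^ 2 *
        ∑ i ∈ Icc 1 j, (c n * i * (y n i ω - m n) - c n ^ 2 * (i : ℝ) ^ 2 / 2) := by
  ext ω
  simp only [Finset.sum_apply, sum_product, mul_sum, llrIncrement]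

variable {m c σ : ι → ℝ} {y : ι → ℕ → Ω → ℝ}

theorem hasLaw_llrIncrement
    (hgauss : ∀ n, ∀ i : ℕ, 1 ≤ i →
      μ.map (y n i) = gaussianReal (m n + c n * i) (Real.toNNReal (σ n ^ 2)))
    {p : ι × ℕ} (hp : 1 ≤ p.2) :
    HasLaw (llrIncrement m c σ y p) (gaussianReal (c p.1 ^ 2 * p.2 ^ 2 / (2 * σ p.1 ^ 2))
      (Real.toNNReal ((c p.1 * p.2 / σ p.1 ^ 2) ^ 2 * σ p.1 ^ 2))) μ := by
  obtain ⟨n, i⟩ := p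
  have hy : HasLaw (y n i) (gaussianReal (m n + c n * i) (Real.toNNReal (σ n ^ 2))) μ :=
    ⟨.of_map_ne_zero (hgauss n i hp ▸ IsProbabilityMeasure.ne_zero _), hgauss n i hp⟩
  convert gaussianReal_const_mul (gaussianReal_sub_const (gaussianReal_const_mul
    (gaussianReal_sub_const hy (m n)) (c n * i)) (c n ^ 2 * i ^ 2 / 2)) (1 / σ n ^ 2) using 2
  · rfl
  · ring
  · apply NNReal.eq
    rw [Real.coe_toNNReal _ (by positivity), NNReal.coe_mul, NNReal.coe_mul, NNReal.coe_mk,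
      NNReal.coe_mk, Real.coe_toNNReal _ (sq_nonneg _)]
    ring

theorem memLp_sum_llrIncrement [Fintype ι]
    (hgauss : ∀ n, ∀ i : ℕ, 1 ≤ i →
      μ.map (y n i) = gaussianReal (m n + c n * i) (Real.toNNReal (σ n ^ 2)))
    (j : ℕ) : MemLp (∑ p ∈ univ ×ˢ Icc 1 j, llrIncrement m c σ y p) 2 μ :=
  memLp_finsetSum' _ fun _ hp =>
    (hasLaw_llrIncrement hgauss (mem_Icc.1 (mem_product.1 hp).2).1).hasGaussianLaw.memLp_two

theorem integral_sum_llrIncrement [Fintype ι]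
    (hgauss : ∀ n, ∀ i : ℕ, 1 ≤ i →
      μ.map (y n i) = gaussianReal (m n + c n * i) (Real.toNNReal (σ n ^ 2))) (j : ℕ) :
    μ[∑ p ∈ univ ×ˢ Icc 1 j, llrIncrement m c σ y p] =
      (∑ n, c n ^ 2 / (2 * σ n ^ 2)) * ∑ i ∈ Icc 1 j, (i : ℝ) ^ 2 := by
  have hlaw (p) (hp : p ∈ univ ×ˢ Icc 1 j) :=
    hasLaw_llrIncrement (μ := μ) hgauss (mem_Icc.1 (mem_product.1 hp).2).1
  simp only [Finset.sum_apply]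
  rw [integral_finsetSum _ fun p hp => (hlaw p hp).hasGaussianLaw.integrable,
    sum_congr rfl fun p hp => (hlaw p hp).integral_eq.trans integral_id_gaussianReal,
    sum_product, sum_mul]
  refine sum_congr rfl fun n _ => ?_
  rw [mul_sum]
  refine sum_congr rfl fun i _ => ?_
  ring

theorem variance_sum_llrIncrement [Fintype ι]
    (hindep : iIndepFun (fun p : ι × ℕ => y p.1 p.2) μ)
    (hgauss : ∀ n, ∀ i : ℕ, 1 ≤ i →
      μ.map (y n i) = gaussianReal (m n + c n * i) (Real.toNNReal (σ n ^ 2))) (j : ℕ) :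
    Var[∑ p ∈ univ ×ˢ Icc 1 j, llrIncrement m c σ y p; μ] =
      (∑ n, (c n / σ n ^ 2) ^ 2 * σ n ^ 2) * ∑ i ∈ Icc 1 j, (i : ℝ) ^ 2 := by
  have hlaw (p) (hp : p ∈ univ ×ˢ Icc 1 j) :=
    hasLaw_llrIncrement (μ := μ) hgauss (mem_Icc.1 (mem_product.1 hp).2).1
  have hindep' : iIndepFun (llrIncrement m c σ y) μ :=
    hindep.comp (fun p x => 1 / σ p.1 ^ 2 * (c p.1 * p.2 * (x - m p.1) - c p.1 ^ 2 * p.2 ^ 2 / 2))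
      fun _ => by fun_prop
  rw [IndepFun.variance_sum (fun p hp => (hlaw p hp).hasGaussianLaw.memLp_two)
      fun p _ q _ hpq => hindep'.indepFun hpq,
    sum_congr rfl fun p hp => (hlaw p hp).variance_eq.trans variance_id_gaussianReal,
    sum_product, sum_mul]
  refine sum_congr rfl fun n _ => ?_
  rw [mul_sum]
  refine sum_congr rfl fun i _ => ?_
  rw [Real.coe_toNNReal _ (by positivity)]
  ring

end SlopeChange

theorem loglik_cubic_slln_general {Ω : Type*} {mΩ : MeasurableSpace Ω}
    (μ : Measure Ω) [IsProbabilityMeasure μ]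
    {ι : Type*} [Fintype ι]
    (m c σ : ι → ℝ)
    (y : ι → ℕ → Ω → ℝ)
    (hindep : iIndepFun (fun p : ι × ℕ => y p.1 p.2) μ)
    (hgauss : ∀ n, ∀ i : ℕ, 1 ≤ i →
      Measure.map (y n i) μ = gaussianReal (m n + c n * i) (Real.toNNReal ((σ n) ^ 2)))
    (lam : ℕ → Ω → ℝ)
    (hlam : ∀ j, lam j = fun ω =>
      ∑ n : ι, (1 / (σ n) ^ 2) *
        ∑ i ∈ Finset.Icc 1 j, (c n * i * (y n i ω - m n) - c n ^ 2 * (i : ℝ) ^ 2 / 2)) :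
    ∀ᵐ ω ∂μ, Tendsto (fun j : ℕ => lam j ω / (j : ℝ) ^ 3) atTop
      (nhds (∑ n : ι, c n ^ 2 / (6 * (σ n) ^ 2))) := by
  have hlam' (j : ℕ) : lam j = ∑ p ∈ univ ×ˢ Icc 1 j, llrIncrement m c σ y p :=
    (hlam j).trans (sum_llrIncrement m c σ y j).symm
  set K := ∑ n, (c n / σ n ^ 2) ^ 2 * σ n ^ 2
  -- shifted by one so that the normalisation `j³` is positive
  have hsum : Summable fun j : ℕ => Var[lam (j + 1); μ] / (((j + 1 : ℕ) : ℝ) ^ 3) ^ 2 := by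
    refine .of_nonneg_of_le (fun j => div_nonneg (variance_nonneg _ _) (by positivity))
      (fun j => ?_)
      ((summable_nat_add_iff 1).2 (Real.summable_nat_pow_inv.2 (by norm_num : 1 < 3)) |>.mul_left K)
    rw [hlam', variance_sum_llrIncrement hindep hgauss]
    calc _ ≤ K * ((j + 1 : ℕ) : ℝ) ^ 3 / (((j + 1 : ℕ) : ℝ) ^ 3) ^ 2 := by
          gcongr; exact sum_Icc_sq_le_cube _
      _ = K * (((j + 1 : ℕ) : ℝ) ^ 3)⁻¹ := by field_simp
  have hfluct : ∀ᵐ ω ∂μ,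
      Tendsto (fun j : ℕ => (lam j ω - μ[lam j]) / (j : ℝ) ^ 3) atTop (𝓝 0) := by
    filter_upwards [ae_tendsto_sub_integral_div_of_summable_variance
      (fun j => hlam' (j + 1) ▸ memLp_sum_llrIncrement hgauss (j + 1))
      (fun j => by positivity) hsum] with ω hω
    exact (tendsto_add_atTop_iff_nat 1).1 hω
  have hdrift := tendsto_sum_Icc_sq_div_cube.const_mul (∑ n, c n ^ 2 / (2 * σ n ^ 2))
  rw [sum_mul, sum_congr rfl fun n _ => show c n ^ 2 / (2 * σ n ^ 2) * (1 / 3) =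
    c n ^ 2 / (6 * σ n ^ 2) by ring] at hdrift
  filter_upwards [hfluct] with ω hω
  refine (zero_add (∑ n, c n ^ 2 / (6 * σ n ^ 2)) ▸ hω.add hdrift).congr fun j => ?_
  rw [hlam', integral_sum_llrIncrement hgauss]
  ring

/-- Strong law for the slope-change log-likelihood ratio:
`λ_j / j³ → Σ_{n∈A} c_n²/(6σ_n²)` almost surely. -/
theorem loglik_cubic_slln {Ω : Type*} {mΩ : MeasurableSpace Ω}
    (μ : Measure Ω) [IsProbabilityMeasure μ]
    {ι : Type*} [Fintype ι] [Nonempty ι]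
    (m c σ : ι → ℝ) (hσ : ∀ n, 0 < σ n)
    (y : ι → ℕ → Ω → ℝ)
    (hindep : iIndepFun (fun p : ι × ℕ => y p.1 p.2) μ)
    (hgauss : ∀ n, ∀ i : ℕ, 1 ≤ i →
      Measure.map (y n i) μ = gaussianReal (m n + c n * i) (Real.toNNReal ((σ n) ^ 2)))
    (lam : ℕ → Ω → ℝ)
    (hlam : ∀ j, lam j = fun ω =>
      ∑ n : ι, (1 / (σ n) ^ 2) *
        ∑ i ∈ Finset.Icc 1 j, (c n * i * (y n i ω - m n) - c n ^ 2 * (i : ℝ) ^ 2 / 2)) :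
    ∀ᵐ ω ∂μ, Tendsto (fun j : ℕ => lam j ω / (j : ℝ) ^ 3) atTop
      (nhds (∑ n : ι, c n ^ 2 / (6 * (σ n) ^ 2))) :=
  loglik_cubic_slln_general (mΩ := mΩ) μ m c σ y hindep hgauss lam hlam
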